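/- Let d ≥ 2 be an integer, set e = d if d is odd and e = d/2 if d is even, and let n ≥ 0 be an integer. Then B_d(∏_{i=n+1}^{n+e}(q^{2i} − 1)) = 4ne + 2e² + 2e + d/2. -/

import Mathlib

/-
Since `q^m - 1 = ∏_{r ∣ m} Φ_r` with every `Φ_r` irreducible, multiplicities in a product of
such factors add up, and `B_d(q^m - 1) = ∑_{r ∣ m} (φ(r) + d·φ_d(r)) = m + d⌊m/d⌋ + d/2`:
besides `∑_{r ∣ m} φ(r) = m`, sorting the `k ≤ m/d` by `gcd(k, m)` gives
`∑_{r ∣ m} #{j ≤ r/d : gcd(j, r) = 1} = ⌊m/d⌋`. Thus `B_d(q^{2i} - 1) = 4i - (2i mod d) + d/2`.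
As `d ∣ 2e`, the residue `2i mod d` is `e`-periodic in `i`, and over one period it runs through
the multiples of `d/e` below `d` (multiplication by `2` permutes `ℤ/d` for odd `d`), which sum
to `(e - 1)d/2`.
-/

open Polynomial

/-- `φ_d(r)`: for `r = 1` it is `1/2`; for `r ≥ 2` it is the number of integers `j` with
`1 ≤ j ≤ r / d` that are coprime to `r`. -/
noncomputable def phiD (d r : ℕ) : ℚ :=
  if r = 1 then 1 / 2
  else (((Finset.Icc 1 (r / d)).filter fun j => Nat.gcd j r = 1).card : ℚ)

/-- `B_d(f)` for `f` a rational constant times a power of `q` times a product of cyclotomic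
polynomials: if `f = c·q^a·∏_{r≥1} Φ_r^{m_r}`, then `B_d(f) = 2a + Σ_r m_r·(φ(r) + d·φ_d(r))`.
The exponents are recovered as multiplicities; since `Φ_r ∣ f` forces
`φ(r) ≤ deg f` and `r ≤ 2·φ(r)²`, the sum below captures every relevant `r`. -/
noncomputable def Bd (d : ℕ) (f : Polynomial ℚ) : ℚ :=
  2 * (multiplicity X f : ℚ) +
    ∑ r ∈ Finset.Icc 1 (2 * f.natDegree ^ 2 + 1),
      (multiplicity (cyclotomic r ℚ) f : ℚ) * ((Nat.totient r : ℚ) + d * phiD d r)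

open Finset

namespace Polynomial

lemma emultiplicity_cyclotomic_cyclotomic {r s : ℕ} (hr : 0 < r) (hs : 0 < s) :
    emultiplicity (cyclotomic r ℚ) (cyclotomic s ℚ) = if r = s then 1 else 0 := by
  have hirr := cyclotomic.irreducible_rat hr
  split_ifs with h
  · subst h
    exact (FiniteMultiplicity.of_not_isUnit hirr.not_isUnit
      (cyclotomic_ne_zero r ℚ)).emultiplicity_self
  · refine emultiplicity_eq_zero.2 fun hdvd => h (cyclotomic_injective (R := ℚ) ?_)
    exact eq_of_monic_of_associated (cyclotomic.monic r ℚ) (cyclotomic.monic s ℚ)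
      (hirr.associated_of_dvd (cyclotomic.irreducible_rat hs) hdvd)

lemma emultiplicity_cyclotomic_X_pow_sub_one {r m : ℕ} (hr : 0 < r) (hm : 0 < m) :
    emultiplicity (cyclotomic r ℚ) (X ^ m - 1) = if r ∣ m then 1 else 0 := by
  rw [← prod_cyclotomic_eq_X_pow_sub_one hm, Finset.emultiplicity_prod
      (cyclotomic.irreducible_rat hr).prime,
    sum_congr rfl fun s hs => emultiplicity_cyclotomic_cyclotomic hr (Nat.pos_of_mem_divisors hs),
    sum_ite_eq]
  simp [hm.ne']

variable {ι : Type*} {s : Finset ι} {m : ι → ℕ}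

lemma multiplicity_cyclotomic_prod_X_pow_sub_one {r : ℕ} (hr : 0 < r)
    (hm : ∀ i ∈ s, 0 < m i) :
    multiplicity (cyclotomic r ℚ) (∏ i ∈ s, (X ^ m i - 1)) = #{i ∈ s | r ∣ m i} := by
  apply multiplicity_eq_of_emultiplicity_eq_some
  rw [Finset.emultiplicity_prod (cyclotomic.irreducible_rat hr).prime,
    sum_congr rfl fun i hi => emultiplicity_cyclotomic_X_pow_sub_one hr (hm i hi), sum_boole]

lemma multiplicity_X_prod_X_pow_sub_one (hm : ∀ i ∈ s, 0 < m i) :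
    multiplicity (X : ℚ[X]) (∏ i ∈ s, (X ^ m i - 1)) = 0 := by
  refine multiplicity_eq_zero.2 fun hX => ?_
  rw [X_dvd_iff, coeff_zero_eq_eval_zero, eval_prod, prod_eq_zero_iff] at hX
  obtain ⟨i, hi, h⟩ := hX
  simp [(hm i hi).ne'] at h

lemma monic_prod_X_pow_sub_one (hm : ∀ i ∈ s, 0 < m i) :
    (∏ i ∈ s, (X ^ m i - 1 : ℚ[X])).Monic :=
  monic_prod_of_monic _ _ fun i hi => by simpa using monic_X_pow_sub_C (1 : ℚ) (hm i hi).ne'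

end Polynomial

lemma Bd_prod_X_pow_sub_one (d : ℕ) {ι : Type*} {s : Finset ι} {m : ι → ℕ}
    (hm : ∀ i ∈ s, 0 < m i) :
    Bd d (∏ i ∈ s, (X ^ m i - 1)) =
      ∑ i ∈ s, ∑ r ∈ (m i).divisors, ((r.totient : ℚ) + d * phiD d r) := by
  set f : ℚ[X] := ∏ i ∈ s, (X ^ m i - 1)
  set N := 2 * f.natDegree ^ 2 + 1
  have hdivisors : ∀ i ∈ s, {r ∈ Icc 1 N | r ∣ m i} = (m i).divisors := fun i hi => by
    have hdeg : m i ≤ f.natDegree := by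
      have h := natDegree_le_of_dvd (dvd_prod_of_mem (fun i => (X ^ m i - 1 : ℚ[X])) hi)
        (monic_prod_X_pow_sub_one hm).ne_zero
      rwa [← C_1, natDegree_X_pow_sub_C] at h
    have hN : m i ≤ N := by simp only [N]; nlinarith
    ext r
    simp only [mem_filter, mem_Icc, Nat.mem_divisors]
    refine ⟨fun ⟨_, hr⟩ => ⟨hr, (hm i hi).ne'⟩, fun ⟨hr, _⟩ => ⟨⟨?_, ?_⟩, hr⟩⟩
    · exact Nat.pos_of_dvd_of_pos hr (hm i hi)
    · exact (Nat.le_of_dvd (hm i hi) hr).trans hN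
  rw [Bd, multiplicity_X_prod_X_pow_sub_one hm, Nat.cast_zero, mul_zero, zero_add]
  calc ∑ r ∈ Icc 1 N, (multiplicity (cyclotomic r ℚ) f : ℚ) * ((r.totient : ℚ) + d * phiD d r)
      = ∑ r ∈ Icc 1 N, ∑ i ∈ s, if r ∣ m i then (r.totient : ℚ) + d * phiD d r else 0 := by
        refine sum_congr rfl fun r hr => ?_
        rw [multiplicity_cyclotomic_prod_X_pow_sub_one (mem_Icc.1 hr).1 hm, ← sum_filter,
          sum_const, nsmul_eq_mul]
    _ = ∑ i ∈ s, ∑ r ∈ Icc 1 N, if r ∣ m i then (r.totient : ℚ) + d * phiD d r else 0 :=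
        sum_comm
    _ = _ := sum_congr rfl fun i hi => by rw [← sum_filter, hdivisors i hi]

namespace Nat

lemma card_gcd_eq_one_Icc_div_eq_card_gcd_eq (d : ℕ) {m g : ℕ} (hg : g ∣ m) :
    #{j ∈ Icc 1 (m / g / d) | j.gcd (m / g) = 1} = #{k ∈ Icc 1 (m / d) | m.gcd k = g} := by
  rcases g.eq_zero_or_pos with rfl | hg0
  · simp [eq_zero_of_zero_dvd hg]
  rcases d.eq_zero_or_pos with rfl | hd
  · simp
  obtain ⟨x, rfl⟩ := hg
  rw [Nat.mul_div_cancel_left x hg0]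
  refine card_nbij' (g * ·) (· / g) ?_ ?_ ?_ ?_
  · intro j hj
    simp only [mem_coe, mem_filter, mem_Icc, Nat.le_div_iff_mul_le hd] at hj ⊢
    obtain ⟨⟨hj1, hjx⟩, hcop⟩ := hj
    refine ⟨⟨Nat.mul_pos hg0 hj1, ?_⟩, ?_⟩
    · rw [mul_assoc]
      exact Nat.mul_le_mul_left g hjx
    · rw [Nat.gcd_mul_left, Nat.gcd_comm, hcop, mul_one]
  · intro k hk
    simp only [mem_coe, mem_filter, mem_Icc, Nat.le_div_iff_mul_le hd] at hk ⊢
    obtain ⟨⟨hk1, hkx⟩, hgcd⟩ := hk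
    obtain ⟨q, rfl⟩ : g ∣ k := hgcd ▸ Nat.gcd_dvd_right _ _
    rw [Nat.gcd_mul_left, mul_eq_left₀ hg0.ne'] at hgcd
    rw [Nat.mul_div_cancel_left q hg0, mul_assoc] at *
    refine ⟨⟨Nat.pos_of_mul_pos_left hk1, Nat.le_of_mul_le_mul_left hkx hg0⟩, ?_⟩
    rwa [Nat.gcd_comm]
  · intro j _
    exact Nat.mul_div_cancel_left j hg0
  · intro k hk
    simp only [mem_coe, mem_filter] at hk
    exact Nat.mul_div_cancel' (hk.2 ▸ Nat.gcd_dvd_right _ _)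

lemma sum_divisors_card_gcd_eq_one_Icc_div (d m : ℕ) :
    ∑ r ∈ m.divisors, #{j ∈ Icc 1 (r / d) | j.gcd r = 1} = m / d := by
  rcases m.eq_zero_or_pos with rfl | hm
  · simp
  rw [← sum_div_divisors,
    sum_congr rfl fun g hg => card_gcd_eq_one_Icc_div_eq_card_gcd_eq d (dvd_of_mem_divisors hg),
    ← card_eq_sum_card_fiberwise fun k _ => mem_divisors.2 ⟨gcd_dvd_left m k, hm.ne'⟩, card_Icc,
    Nat.add_sub_cancel]

end Nat

lemma phiD_eq_card_add {d : ℕ} (hd : 2 ≤ d) (r : ℕ) :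
    phiD d r = #{j ∈ Icc 1 (r / d) | j.gcd r = 1} + if r = 1 then 1 / 2 else 0 := by
  unfold phiD
  split_ifs with hr
  · simp [hr, Nat.div_eq_of_lt (by omega : 1 < d)]
  · rw [add_zero]

lemma sum_divisors_phiD {d m : ℕ} (hd : 2 ≤ d) (hm : 0 < m) :
    ∑ r ∈ m.divisors, phiD d r = (m / d : ℕ) + 1 / 2 := by
  simp only [phiD_eq_card_add hd, sum_add_distrib, ← Nat.cast_sum,
    Nat.sum_divisors_card_gcd_eq_one_Icc_div, sum_ite_eq', Nat.one_mem_divisors, hm.ne',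
    ne_eq, not_false_eq_true, if_true]

lemma sum_divisors_totient_add_phiD {d m : ℕ} (hd : 2 ≤ d) (hm : 0 < m) :
    ∑ r ∈ m.divisors, ((r.totient : ℚ) + d * phiD d r) = 2 * m - (m % d : ℕ) + d / 2 := by
  have hdiv : (d : ℚ) * (m / d : ℕ) + (m % d : ℕ) = m := by exact_mod_cast Nat.div_add_mod m d
  rw [sum_add_distrib, ← Nat.cast_sum, Nat.sum_totient, ← mul_sum, sum_divisors_phiD hd hm]
  linear_combination hdiv

lemma Function.Periodic.sum_Ico_add_eq_sum_range {M : Type*} [AddCommMonoid M] {f : ℕ → M}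
    {p : ℕ} (hf : Function.Periodic f p) (a : ℕ) :
    ∑ i ∈ Ico a (a + p), f i = ∑ i ∈ range p, f i := by
  induction a with
  | zero => rw [zero_add, range_eq_Ico]
  | succ a ih =>
    rcases p.eq_zero_or_pos with rfl | hp
    · simp
    rw [← ih, sum_eq_sum_Ico_succ_bot (by omega : a < a + p), show a + 1 + p = a + p + 1 by ring,
      sum_Ico_succ_top (by omega : a + 1 ≤ a + p), hf a, add_comm]

lemma Nat.sum_range_mul_mod_of_coprime {M : Type*} [AddCommMonoid M] (f : ℕ → M) {c p : ℕ}
    (hc : c.Coprime p) : ∑ i ∈ range p, f (c * i % p) = ∑ i ∈ range p, f i := by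
  rcases p.eq_zero_or_pos with rfl | hp
  · simp
  have hinj : Set.InjOn (fun i => c * i % p) (range p) := fun a ha b hb hab =>
    (Nat.ModEq.cancel_left_of_coprime hc.symm hab).eq_of_lt_of_lt (mem_range.1 ha)
      (mem_range.1 hb)
  have himage : (range p).image (fun i => c * i % p) = range p :=
    eq_of_subset_of_card_le (fun x hx => by
      obtain ⟨i, -, rfl⟩ := mem_image.1 hx
      exact mem_range.2 (Nat.mod_lt _ hp)) (Finset.card_image_of_injOn hinj).ge
  rw [← sum_image hinj, himage]

lemma sum_Icc_two_mul_mod {d e : ℕ} (hd : 2 ≤ d) (he : e = if d % 2 = 1 then d else d / 2)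
    (n : ℕ) : (∑ i ∈ Icc (n + 1) (n + e), 2 * i % d) * 2 + d = e * d := by
  have hper : Function.Periodic (fun i => 2 * i % d) e := fun i => by
    obtain ⟨k, hk⟩ : d ∣ 2 * e := by
      split_ifs at he
      exacts [⟨2, by omega⟩, ⟨1, by omega⟩]
    simp only [mul_add, hk, Nat.add_mul_mod_self_left]
  rw [← Ico_add_one_right_eq_Icc, show n + e + 1 = n + 1 + e by ring,
    hper.sum_Ico_add_eq_sum_range]
  obtain ⟨k, rfl⟩ : ∃ k, e = k + 1 := ⟨e - 1, by split_ifs at he <;> omega⟩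
  split_ifs at he with hodd
  · subst he
    rw [Nat.sum_range_mul_mod_of_coprime (fun i => i)
      (Nat.coprime_two_left.2 (Nat.odd_iff.2 hodd)), sum_range_id_mul_two, Nat.add_sub_cancel]
    ring
  · have hde : d = 2 * (k + 1) := by omega
    rw [sum_congr rfl fun i hi => Nat.mod_eq_of_lt (by rw [mem_range] at hi; omega), ← mul_sum,
      mul_assoc, sum_range_id_mul_two, hde, Nat.add_sub_cancel]
    ring

lemma sum_Icc_id_mul_two (n e : ℕ) :
    (∑ i ∈ Icc (n + 1) (n + e), i) * 2 = e * (2 * n + e + 1) := by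
  induction e with
  | zero => simp
  | succ e ih =>
    rw [← add_assoc, sum_Icc_succ_top (by omega), add_mul, ih]
    ring

/-- Let `d ≥ 2`, set `e = d` if `d` is odd and `e = d/2` if `d` is even, and let `n ≥ 0`.
Then `B_d(∏_{i=n+1}^{n+e}(q^{2i} − 1)) = 4ne + 2e² + 2e + d/2`. -/
theorem Bd_prod_consecutive_even_powers (d n e : ℕ) (hd : 2 ≤ d)
    (he : e = if d % 2 = 1 then d else d / 2) :
    Bd d (∏ i ∈ Finset.Icc (n + 1) (n + e), (X ^ (2 * i) - 1))
      = 4 * (n : ℚ) * e + 2 * (e : ℚ) ^ 2 + 2 * (e : ℚ) + (d : ℚ) / 2 := by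
  have hpos : ∀ i ∈ Icc (n + 1) (n + e), 0 < 2 * i := fun i hi => by
    have := (mem_Icc.1 hi).1
    omega
  have hid : ((∑ i ∈ Icc (n + 1) (n + e), i : ℕ) : ℚ) * 2 = e * (2 * n + e + 1) := by
    exact_mod_cast sum_Icc_id_mul_two n e
  have hmod : ((∑ i ∈ Icc (n + 1) (n + e), 2 * i % d : ℕ) : ℚ) * 2 + d = e * d := by
    exact_mod_cast sum_Icc_two_mul_mod hd he n
  rw [Bd_prod_X_pow_sub_one d hpos,
    sum_congr rfl fun i hi => sum_divisors_totient_add_phiD hd (hpos i hi)]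
  simp only [sum_add_distrib, sum_sub_distrib, sum_const, Nat.card_Icc, nsmul_eq_mul]
  rw [show n + e + 1 - (n + 1) = e by omega, ← mul_sum]
  push_cast [← mul_sum] at hid hmod ⊢
  linear_combination 2 * hid - hmod / 2
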